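/- arXiv:1501.02471 — 4 statements merged into one kernel-verified Lean document; each statement's English description precedes it below -/
import Mathlib

section
/- On the region t > 0 of ℝ⁴ with the Kasner-type metric ds² = −dt² + t^{2p} dx² + t^{2q} dy² + t² dz² (p ≠ 1), the vector field X = (1/(1−p)) t ∂_t + x ∂_x + ((q−1)/(p−1)) y ∂_y satisfies 𝓛_X g = (2/(1−p)) g, i.e., X is a homothetic vector field with conformal factor 1/(1−p). -/
open scoped BigOperators
open Real

noncomputable section

variable {ι : Type*} [Fintype ι] [DecidableEq ι]

/-- Partial derivative of a function on coordinate space along the `i`-th coordinate. -/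
def pd (f : (ι → ℝ) → ℝ) (i : ι) (x : ι → ℝ) : ℝ :=
  fderiv ℝ f x (Pi.single i 1)

/-- Christoffel symbols `Γ^k_{ij}` of a metric `g` with inverse `ginv`, in coordinates. -/
def Christoffel (g ginv : (ι → ℝ) → Matrix ι ι ℝ) (k i j : ι) (x : ι → ℝ) : ℝ :=
  (1 / 2) * ∑ l, ginv x k l *
    (pd (fun y => g y l i) j x + pd (fun y => g y l j) i x - pd (fun y => g y i j) l x)

/-- Riemann curvature tensor `R^a_{bcd}` in coordinates. -/
def RiemannUp (g ginv : (ι → ℝ) → Matrix ι ι ℝ) (a b c d : ι) (x : ι → ℝ) : ℝ :=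
  pd (Christoffel g ginv a d b) c x - pd (Christoffel g ginv a c b) d x
    + ∑ e, Christoffel g ginv a c e x * Christoffel g ginv e d b x
    - ∑ e, Christoffel g ginv a d e x * Christoffel g ginv e c b x

/-- Fully covariant Riemann tensor `R_{abcd}`. -/
def RiemannLow (g ginv : (ι → ℝ) → Matrix ι ι ℝ) (a b c d : ι) (x : ι → ℝ) : ℝ :=
  ∑ e, g x a e * RiemannUp g ginv e b c d x

/-- Ricci tensor `R_{bd}`. -/
def RicciT (g ginv : (ι → ℝ) → Matrix ι ι ℝ) (b d : ι) (x : ι → ℝ) : ℝ :=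
  ∑ a, RiemannUp g ginv a b a d x

/-- Scalar curvature. -/
def ScalarCurv (g ginv : (ι → ℝ) → Matrix ι ι ℝ) (x : ι → ℝ) : ℝ :=
  ∑ b, ∑ d, ginv x b d * RicciT g ginv b d x

/-- Lie derivative of the metric `g` along the vector field `X`, in coordinates:
`(𝓛_X g)_{ab} = X^c ∂_c g_{ab} + g_{cb} ∂_a X^c + g_{ac} ∂_b X^c`. -/
def lieD (g : (ι → ℝ) → Matrix ι ι ℝ) (X : (ι → ℝ) → ι → ℝ) (x : ι → ℝ) :
    Matrix ι ι ℝ :=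
  Matrix.of fun a b =>
    (∑ c, X x c * pd (fun y => g y a b) c x)
      + (∑ c, g x c b * pd (fun y => X y c) a x)
      + (∑ c, g x a c * pd (fun y => X y c) b x)

/-- Covariant Hessian `f_{;ab} = ∂_a ∂_b f − Γ^c_{ab} ∂_c f`. -/
def covHess (g ginv : (ι → ℝ) → Matrix ι ι ℝ) (f : (ι → ℝ) → ℝ) (a b : ι)
    (x : ι → ℝ) : ℝ :=
  pd (pd f b) a x - ∑ c, Christoffel g ginv c a b x * pd f c x

end

/-!
For a diagonal metric `g = diag(s_i t^{r_i})` depending only on `t = y₀` and a linear diagonal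
field `X = ∑ k_i y_i ∂_i`, the Lie derivative `𝓛_X g` is again diagonal with entries
`(k₀ r_i + 2 k_i) g_ii`, because `t ∂_t t^r = r t^r`. So `X` is homothetic with factor `c` as
soon as `k₀ r_i + 2 k_i = 2 c` for every `i`. The Kasner-type metric has
`r = (0, 2p, 2q, 2)`, and with `k = (1/(1-p), 1, (q-1)/(p-1), 0)` the four relations hold for
`c = 1/(1-p)`.
-/

section DiagonalMetric

variable {ι : Type*} [DecidableEq ι]

theorem pd_comp_apply [Fintype ι] {f : ℝ → ℝ} {f' : ℝ} {i : ι} {x : ι → ℝ}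
    (hf : HasDerivAt f f' (x i)) (c : ι) :
    pd (fun y => f (y i)) c x = if c = i then f' else 0 := by
  have h : HasFDerivAt (fun y : ι → ℝ => f (y i))
      (f' • ContinuousLinearMap.proj (R := ℝ) (φ := fun _ : ι => ℝ) i) x :=
    hf.comp_hasFDerivAt x (hasFDerivAt_apply i x)
  rw [pd, h.fderiv]
  simp [Pi.single_apply, eq_comm]

@[simp]
theorem pd_const (k : ℝ) (i : ι) (x : ι → ℝ) : pd (fun _ => k) i x = 0 := by
  simp [pd]

theorem pd_const_mul_apply [Fintype ι] (k : ℝ) (i : ι) (x : ι → ℝ) (c : ι) :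
    pd (fun y => k * y i) c x = if c = i then k else 0 := by
  simpa using pd_comp_apply ((hasDerivAt_id (x i)).const_mul k) c

theorem lieD_diagonal_linear [Fintype ι] (i₀ : ι) {d : ι → ℝ → ℝ} {d' : ι → ℝ} (k : ι → ℝ)
    {x : ι → ℝ} (hd : ∀ i, HasDerivAt (d i) (d' i) (x i₀)) :
    lieD (fun y => Matrix.diagonal fun i => d i (y i₀)) (fun y i => k i * y i) x
      = Matrix.diagonal fun i => k i₀ * x i₀ * d' i + 2 * k i * d i (x i₀) := by
  ext a b
  by_cases hab : a = b
  · subst hab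
    simp only [lieD, Matrix.of_apply, Matrix.diagonal_apply,
      pd_comp_apply (hd _), pd_const_mul_apply, mul_ite, ite_mul, zero_mul, mul_zero,
      Finset.sum_ite_eq, Finset.sum_ite_eq', Finset.mem_univ, ↓reduceIte]
    ring
  · simp [lieD, Matrix.diagonal_apply, hab, pd_const_mul_apply]

theorem lieD_powerLaw_eq_smul [Fintype ι] (i₀ : ι) (s r k : ι → ℝ) {c : ℝ}
    (hrel : ∀ i, k i₀ * r i + 2 * k i = 2 * c) {x : ι → ℝ} (hx : 0 < x i₀) :
    lieD (fun y => Matrix.diagonal fun i => s i * y i₀ ^ r i) (fun y i => k i * y i) x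
      = (2 * c) • Matrix.diagonal fun i => s i * x i₀ ^ r i := by
  rw [lieD_diagonal_linear i₀ k
    fun i => ((Real.hasDerivAt_rpow_const (Or.inl hx.ne')).const_mul (s i)),
    ← Matrix.diagonal_smul]
  congr 1
  funext i
  have hpow : x i₀ * x i₀ ^ (r i - 1) = x i₀ ^ r i := by
    rw [Real.rpow_sub_one hx.ne', mul_div_cancel₀ _ hx.ne']
  rw [Pi.smul_apply, smul_eq_mul]
  linear_combination s i * x i₀ ^ r i * hrel i + k i₀ * s i * r i * hpow

end DiagonalMetric

/-- On `t > 0` with the Kasner-type metric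
`ds² = −dt² + t^{2p} dx² + t^{2q} dy² + t² dz²` (`p ≠ 1`), the vector field
`X = (1/(1−p)) t ∂_t + x ∂_x + ((q−1)/(p−1)) y ∂_y` is a homothetic vector field
with conformal factor `1/(1−p)`. -/
theorem kasner_type_homothety (p q : ℝ) (hp : p ≠ 1)
    (g : (Fin 4 → ℝ) → Matrix (Fin 4) (Fin 4) ℝ)
    (hg : g = fun x => Matrix.diagonal
      ![-1, (x 0) ^ (2 * p : ℝ), (x 0) ^ (2 * q : ℝ), (x 0) ^ 2])
    (X : (Fin 4 → ℝ) → Fin 4 → ℝ)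
    (hX : X = fun x => ![(1 / (1 - p)) * x 0, x 1, ((q - 1) / (p - 1)) * x 2, 0]) :
    ∀ x : Fin 4 → ℝ, 0 < x 0 → lieD g X x = (2 * (1 / (1 - p))) • g x := by
  intro x hx
  have hg_powerLaw : g = fun y => Matrix.diagonal fun i =>
      ![-1, 1, 1, 1] i * y 0 ^ ![0, 2 * p, 2 * q, 2] i := by
    rw [hg]; funext y; congr 1; funext i; fin_cases i <;> simp
  have hX_linear : X = fun y i => ![1 / (1 - p), 1, (q - 1) / (p - 1), 0] i * y i := by
    rw [hX]; funext y i; fin_cases i <;> simp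
  have h1p : (1 : ℝ) - p ≠ 0 := sub_ne_zero.mpr hp.symm
  have hp1 : p - 1 ≠ 0 := sub_ne_zero.mpr hp
  rw [hg_powerLaw, hX_linear]
  refine lieD_powerLaw_eq_smul 0 _ _ _ (fun i => ?_) hx
  fin_cases i <;> simp only [Fin.zero_eta, Fin.mk_one, Fin.reduceFinMk, Matrix.cons_val] <;>
    field_simp <;> ring
end

section
/- On the region t > 0 of ℝ⁴ with the Kasner-type metric ds² = −dt² + t^{2p} dx² + t^{2q} dy² + t^{2r} dz², with p ≠ 1, the vector field X = (1/(1−p)) t ∂_t + x ∂_x + ((q−1)/(p−1)) y ∂_y + ((r−1)/(p−1)) z ∂_z is a homothetic vector field with conformal factor 1/(1−p). -/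
open scoped BigOperators
open Real

/-! For a diagonal metric `g_aa = ε_a t^{2 e_a}` depending only on `t = x^i` and a linear field
`X = Σ_a μ_a x^a ∂_a`, only the `∂_t` derivative of the metric survives, so
`(𝓛_X g)_aa = 2 (μ_a + e_a μ_t) g_aa`. Hence `X` is homothetic with factor `c` as soon as
`μ_a + e_a μ_t = c` for every `a`; the Kasner field is the solution with `e = (0, p, q, r)` and
`μ_t = c = 1/(1 - p)`. -/

section LieDerivative

variable {ι : Type*} [Fintype ι] [DecidableEq ι]

theorem pd_const_mul_coord (s : ℝ) (i j : ι) (x : ι → ℝ) :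
    pd (fun y => s * y i) j x = if j = i then s else 0 := by
  have h : HasFDerivAt (fun y : ι → ℝ => s * y i)
      (s • (ContinuousLinearMap.proj i : (ι → ℝ) →L[ℝ] ℝ)) x :=
    (ContinuousLinearMap.proj i : (ι → ℝ) →L[ℝ] ℝ).hasFDerivAt.const_mul s
  simp [pd, h.fderiv, Pi.single_apply, eq_comm]

theorem pd_const_mul_rpow_coord (s e : ℝ) (i j : ι) {x : ι → ℝ} (hx : 0 < x i) :
    pd (fun y => s * y i ^ e) j x = if j = i then s * (e * x i ^ (e - 1)) else 0 := by
  have hpow : HasDerivAt (fun t : ℝ => s * t ^ e) (s * (e * x i ^ (e - 1))) (x i) :=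
    (Real.hasDerivAt_rpow_const (Or.inl hx.ne')).const_mul s
  have h : HasFDerivAt (fun y : ι → ℝ => s * y i ^ e)
      ((s * (e * x i ^ (e - 1))) • (ContinuousLinearMap.proj i : (ι → ℝ) →L[ℝ] ℝ)) x :=
    hpow.comp_hasFDerivAt (f := fun y : ι → ℝ => y i) x
      (ContinuousLinearMap.proj i : (ι → ℝ) →L[ℝ] ℝ).hasFDerivAt
  simp [pd, h.fderiv, Pi.single_apply, eq_comm]

theorem lieD_diagonal_linear_s10 (G : ι → (ι → ℝ) → ℝ) (μ : ι → ℝ) (x : ι → ℝ) :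
    lieD (fun y => Matrix.diagonal fun a => G a y) (fun y c => μ c * y c) x =
      Matrix.diagonal fun a => ∑ c, μ c * x c * pd (G a) c x + 2 * μ a * G a x := by
  have pd_zero (c : ι) : pd (fun _ : ι → ℝ => (0 : ℝ)) c x = 0 := by simp [pd]
  ext a b
  rcases eq_or_ne a b with rfl | hab
  · simp only [lieD, Matrix.diagonal_apply, pd_const_mul_coord, mul_ite, ite_mul, zero_mul,
      mul_zero, Finset.sum_ite_eq, Finset.mem_univ, ↓reduceIte, Matrix.of_apply]
    ring
  · simp [lieD, pd_const_mul_coord, Matrix.diagonal_apply, hab, pd_zero]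

theorem lieD_diagonal_rpow_linear (ε e μ : ι → ℝ) (c : ℝ) (i : ι) {x : ι → ℝ} (hx : 0 < x i)
    (hμ : ∀ a, μ a + e a * μ i = c) :
    lieD (fun y => Matrix.diagonal fun a => ε a * y i ^ (2 * e a)) (fun y b => μ b * y b) x =
      (2 * c) • Matrix.diagonal fun a => ε a * x i ^ (2 * e a) := by
  rw [lieD_diagonal_linear_s10, ← Matrix.diagonal_smul]
  congr 1
  funext a
  simp only [pd_const_mul_rpow_coord _ _ _ _ hx, mul_ite, mul_zero, Finset.sum_ite_eq',
    Finset.mem_univ, if_true, Pi.smul_apply, smul_eq_mul, ← hμ a]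
  rw [Real.rpow_sub hx, Real.rpow_one]
  field_simp
  ring

end LieDerivative

/-- On `t > 0` with the Kasner-type metric
`ds² = −dt² + t^{2p} dx² + t^{2q} dy² + t^{2r} dz²` (`p ≠ 1`), the vector field
`X = (1/(1−p)) t ∂_t + x ∂_x + ((q−1)/(p−1)) y ∂_y + ((r−1)/(p−1)) z ∂_z` is a
homothetic vector field with conformal factor `1/(1−p)`. -/
theorem kasner_type_homothety_general (p q r : ℝ) (hp : p ≠ 1)
    (g : (Fin 4 → ℝ) → Matrix (Fin 4) (Fin 4) ℝ)
    (hg : g = fun x => Matrix.diagonal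
      ![-1, (x 0) ^ (2 * p : ℝ), (x 0) ^ (2 * q : ℝ), (x 0) ^ (2 * r : ℝ)])
    (X : (Fin 4 → ℝ) → Fin 4 → ℝ)
    (hX : X = fun x => ![(1 / (1 - p)) * x 0, x 1,
      ((q - 1) / (p - 1)) * x 2, ((r - 1) / (p - 1)) * x 3]) :
    ∀ x : Fin 4 → ℝ, 0 < x 0 → lieD g X x = (2 * (1 / (1 - p))) • g x := by
  intro x hx
  have hg_pow : g = fun y =>
      Matrix.diagonal fun a => ![-1, 1, 1, 1] a * y 0 ^ (2 * ![0, p, q, r] a) := by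
    subst hg
    funext y
    congr 1
    funext a
    fin_cases a <;> simp
  have hX_linear : X = fun y b => ![1 / (1 - p), 1, (q - 1) / (p - 1), (r - 1) / (p - 1)] b * y b := by
    subst hX
    funext y b
    fin_cases b <;> simp
  rw [hg_pow, hX_linear]
  refine lieD_diagonal_rpow_linear _ _ _ _ 0 hx fun a => ?_
  fin_cases a <;> simp <;> field_simp <;> ring
end

section
/- On the region τ > 0 of ℝ⁴ with metric g = C(τ)² (−dτ² + τ^{2(α₂−1)/α₂} dx² + τ^{2(α₂−α₁)/α₂} dy² + dz²), where C is smooth and nonvanishing and α₂ ≠ 0, the vector field X = α₂ τ ∂_τ + x ∂_x + α₁ y ∂_y + α₂ z ∂_z satisfies 𝓛_X g = 2ψ g with ψ(τ) = α₂ (1 + τ (ln|C|)'(τ)). -/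
open scoped BigOperators
open Real

noncomputable section
lemma pd_comp (F : ℝ → ℝ) (j : Fin 4) (x : Fin 4 → ℝ) (hF : DifferentiableAt ℝ F (x j)) (i : Fin 4) :
    pd (fun y => F (y j)) i x = if i = j then deriv F (x j) else 0 := by
  have hproj : HasFDerivAt (fun y : Fin 4 → ℝ => y j)
      (ContinuousLinearMap.proj j : (Fin 4 → ℝ) →L[ℝ] ℝ) x :=
    (ContinuousLinearMap.proj j : (Fin 4 → ℝ) →L[ℝ] ℝ).hasFDerivAt
  have h : HasFDerivAt (fun y : Fin 4 → ℝ => F (y j))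
      ((fderiv ℝ F (x j)).comp (ContinuousLinearMap.proj j)) x :=
    (hF.hasFDerivAt).comp x hproj
  rw [pd, h.fderiv]
  simp only [ContinuousLinearMap.comp_apply, ContinuousLinearMap.proj_apply, Pi.single_apply]
  by_cases hij : i = j
  · simp [hij, fderiv_apply_one_eq_deriv]
  · simp [hij, Ne.symm hij]

lemma pd_zero' (i : Fin 4) (x : Fin 4 → ℝ) : pd (fun _ : Fin 4 → ℝ => (0:ℝ)) i x = 0 := by
  simp [pd]
end


/-- On `τ > 0` with metric
`g = C(τ)²(−dτ² + τ^{2(α₂−1)/α₂} dx² + τ^{2(α₂−α₁)/α₂} dy² + dz²)` with `C` smooth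
and nonvanishing and `α₂ ≠ 0`, the vector field
`X = α₂τ∂_τ + x∂_x + α₁y∂_y + α₂z∂_z` satisfies `𝓛_X g = 2ψ g` with
`ψ(τ) = α₂(1 + τ (ln|C|)'(τ))`. -/
theorem bianchiI_B2_ckv (α₁ α₂ : ℝ) (hα₂ : α₂ ≠ 0) (C : ℝ → ℝ)
    (hC : ContDiff ℝ (⊤ : ℕ∞) C) (hC0 : ∀ τ, C τ ≠ 0)
    (g : (Fin 4 → ℝ) → Matrix (Fin 4) (Fin 4) ℝ)
    (hg : g = fun x => (C (x 0)) ^ 2 • Matrix.diagonal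
      ![-1, (x 0) ^ (2 * (α₂ - 1) / α₂ : ℝ), (x 0) ^ (2 * (α₂ - α₁) / α₂ : ℝ), 1])
    (X : (Fin 4 → ℝ) → Fin 4 → ℝ)
    (hX : X = fun x => ![α₂ * x 0, x 1, α₁ * x 2, α₂ * x 3])
    (ψ : (Fin 4 → ℝ) → ℝ)
    (hψ : ψ = fun x => α₂ * (1 + x 0 * deriv (fun τ => Real.log |C τ|) (x 0))) :
    ∀ x : Fin 4 → ℝ, 0 < x 0 → lieD g X x = (2 * ψ x) • g x := by
  subst hg hX hψ
  intro x hx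
  have hτ : x 0 ≠ 0 := ne_of_gt hx
  have hCd : Differentiable ℝ C := hC.differentiable (by simp)
  have hC' : HasDerivAt C (deriv C (x 0)) (x 0) := (hCd (x 0)).hasDerivAt
  have hlog : deriv (fun τ => Real.log |C τ|) (x 0) = deriv C (x 0) / C (x 0) := by
    have heq : (fun τ => Real.log |C τ|) = fun τ => Real.log (C τ) := by
      funext t; rw [Real.log_abs]
    rw [heq]
    have h : HasDerivAt (fun τ => Real.log (C τ)) ((C (x 0))⁻¹ * deriv C (x 0)) (x 0) :=
      (Real.hasDerivAt_log (hC0 (x 0))).comp (x 0) hC'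
    rw [h.deriv]
    ring
  have hsq : HasDerivAt (fun t => C t ^ 2) (2 * C (x 0) * deriv C (x 0)) (x 0) := by
    simpa using hC'.fun_pow 2
  have hF0 : HasDerivAt (fun t => -C t ^ 2) (-(2 * C (x 0) * deriv C (x 0))) (x 0) := hsq.neg
  have hr1 : HasDerivAt (fun t : ℝ => t ^ (2 * (α₂ - 1) / α₂))
      (2 * (α₂ - 1) / α₂ * x 0 ^ (2 * (α₂ - 1) / α₂ - 1)) (x 0) :=
    Real.hasDerivAt_rpow_const (Or.inl hτ)
  have hr2 : HasDerivAt (fun t : ℝ => t ^ (2 * (α₂ - α₁) / α₂))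
      (2 * (α₂ - α₁) / α₂ * x 0 ^ (2 * (α₂ - α₁) / α₂ - 1)) (x 0) :=
    Real.hasDerivAt_rpow_const (Or.inl hτ)
  have hF1 : HasDerivAt (fun t => C t ^ 2 * t ^ (2 * (α₂ - 1) / α₂))
      (2 * C (x 0) * deriv C (x 0) * x 0 ^ (2 * (α₂ - 1) / α₂)
        + C (x 0) ^ 2 * (2 * (α₂ - 1) / α₂ * x 0 ^ (2 * (α₂ - 1) / α₂ - 1))) (x 0) :=
    hsq.mul hr1
  have hF2 : HasDerivAt (fun t => C t ^ 2 * t ^ (2 * (α₂ - α₁) / α₂))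
      (2 * C (x 0) * deriv C (x 0) * x 0 ^ (2 * (α₂ - α₁) / α₂)
        + C (x 0) ^ 2 * (2 * (α₂ - α₁) / α₂ * x 0 ^ (2 * (α₂ - α₁) / α₂ - 1))) (x 0) :=
    hsq.mul hr2
  have pd0 : ∀ i, pd (fun y : Fin 4 → ℝ => -C (y 0) ^ 2) i x
      = if i = 0 then -(2 * C (x 0) * deriv C (x 0)) else 0 := by
    intro i
    have h := pd_comp (fun t => -C t ^ 2) 0 x hF0.differentiableAt i
    rw [hF0.deriv] at h; exact h
  have pd1 : ∀ i, pd (fun y : Fin 4 → ℝ => C (y 0) ^ 2 * y 0 ^ (2 * (α₂ - 1) / α₂)) i x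
      = if i = 0 then 2 * C (x 0) * deriv C (x 0) * x 0 ^ (2 * (α₂ - 1) / α₂)
        + C (x 0) ^ 2 * (2 * (α₂ - 1) / α₂ * x 0 ^ (2 * (α₂ - 1) / α₂ - 1)) else 0 := by
    intro i
    have h := pd_comp (fun t => C t ^ 2 * t ^ (2 * (α₂ - 1) / α₂)) 0 x hF1.differentiableAt i
    rw [hF1.deriv] at h; exact h
  have pd2 : ∀ i, pd (fun y : Fin 4 → ℝ => C (y 0) ^ 2 * y 0 ^ (2 * (α₂ - α₁) / α₂)) i x
      = if i = 0 then 2 * C (x 0) * deriv C (x 0) * x 0 ^ (2 * (α₂ - α₁) / α₂)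
        + C (x 0) ^ 2 * (2 * (α₂ - α₁) / α₂ * x 0 ^ (2 * (α₂ - α₁) / α₂ - 1)) else 0 := by
    intro i
    have h := pd_comp (fun t => C t ^ 2 * t ^ (2 * (α₂ - α₁) / α₂)) 0 x hF2.differentiableAt i
    rw [hF2.deriv] at h; exact h
  have pd3 : ∀ i, pd (fun y : Fin 4 → ℝ => C (y 0) ^ 2) i x
      = if i = 0 then 2 * C (x 0) * deriv C (x 0) else 0 := by
    intro i
    have h := pd_comp (fun t => C t ^ 2) 0 x hsq.differentiableAt i
    rw [hsq.deriv] at h; exact h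
  have pdX0 : ∀ i, pd (fun y : Fin 4 → ℝ => α₂ * y 0) i x = if i = 0 then α₂ else 0 := by
    intro i
    have h := pd_comp (fun t => α₂ * t) 0 x (by fun_prop) i
    rw [show deriv (fun t : ℝ => α₂ * t) (x 0) = α₂ by
      simpa using ((hasDerivAt_id (x 0)).const_mul α₂).deriv] at h
    exact h
  have pdX1 : ∀ i, pd (fun y : Fin 4 → ℝ => y 1) i x = if i = 1 then 1 else 0 := by
    intro i
    have h := pd_comp (fun t : ℝ => t) 1 x differentiable_id.differentiableAt i
    rw [show deriv (fun t : ℝ => t) (x 1) = 1 by simp] at h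
    exact h
  have pdX2 : ∀ i, pd (fun y : Fin 4 → ℝ => α₁ * y 2) i x = if i = 2 then α₁ else 0 := by
    intro i
    have h := pd_comp (fun t => α₁ * t) 2 x (by fun_prop) i
    rw [show deriv (fun t : ℝ => α₁ * t) (x 2) = α₁ by
      simpa using ((hasDerivAt_id (x 2)).const_mul α₁).deriv] at h
    exact h
  have pdX3 : ∀ i, pd (fun y : Fin 4 → ℝ => α₂ * y 3) i x = if i = 3 then α₂ else 0 := by
    intro i
    have h := pd_comp (fun t => α₂ * t) 3 x (by fun_prop) i
    rw [show deriv (fun t : ℝ => α₂ * t) (x 3) = α₂ by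
      simpa using ((hasDerivAt_id (x 3)).const_mul α₂).deriv] at h
    exact h
  ext a b
  fin_cases a <;> fin_cases b <;>
    simp only [lieD, Matrix.of_apply, Fin.sum_univ_four, Matrix.smul_apply,
      Matrix.diagonal_apply, smul_eq_mul, Fin.isValue, Fin.zero_eta, Fin.mk_one,
      Matrix.cons_val_zero, Matrix.cons_val_one, Matrix.head_cons,
      Matrix.cons_val_two, Matrix.tail_cons, Matrix.cons_val_three,
      Fin.reduceEq, reduceIte, Fin.reduceFinMk,
      mul_zero, zero_mul, mul_one, mul_neg, neg_zero, add_zero, zero_add] <;>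
    simp only [pd0, pd1, pd2, pd3, pdX0, pdX1, pdX2, pdX3, pd_zero',
      Fin.reduceEq, reduceIte, if_true, mul_zero, zero_mul, mul_one, mul_neg,
      neg_zero, add_zero, zero_add, neg_neg]
  all_goals simp only [hlog]
  all_goals (try simp only [Real.rpow_sub_one hτ])
  all_goals field_simp [hC0 (x 0)]
  all_goals ring
end

section
/- Let h be a pseudo-Riemannian metric on an (n−1)-manifold (n ≥ 5) such that the product metric g = ε dt² + h on ℝ × N has vanishing Weyl tensor. Then h is an Einstein metric: Ric(h) = (Scal(h)/(n−1)) h. -/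
open scoped BigOperators
open Real

section Helpers

lemma pd_congr_const {ι : Type*} [Fintype ι] [DecidableEq ι]
    {F : (ι → ℝ) → ℝ} {c : ℝ} (hF : ∀ x, F x = c) (i : ι) (x : ι → ℝ) :
    pd F i x = 0 := by
  rw [show F = fun _ => c from funext hF]
  simp [pd]

lemma contDiff_pd {ι : Type*} [Fintype ι] [DecidableEq ι]
    {f : (ι → ℝ) → ℝ} (hf : ContDiff ℝ (⊤ : ℕ∞) f) (i : ι) :
    ContDiff ℝ (⊤ : ℕ∞) (pd f i) :=
  (hf.fderiv_right (by simp)).clm_apply contDiff_const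

lemma contDiff_christoffel {ι : Type*} [Fintype ι] [DecidableEq ι]
    {h hinv : (ι → ℝ) → Matrix ι ι ℝ}
    (hsm : ∀ i j, ContDiff ℝ (⊤ : ℕ∞) (fun y => h y i j))
    (hinvsm : ∀ i j, ContDiff ℝ (⊤ : ℕ∞) (fun y => hinv y i j)) (k i j : ι) :
    ContDiff ℝ (⊤ : ℕ∞) (Christoffel h hinv k i j) := by
  unfold Christoffel
  refine contDiff_const.mul (ContDiff.sum fun l _ => (hinvsm k l).mul ?_)
  exact ((contDiff_pd (hsm l i) j).add (contDiff_pd (hsm l j) i)).sub (contDiff_pd (hsm i j) l)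

lemma pd_restr' {m : ℕ} {F : ((Unit ⊕ Fin m) → ℝ) → ℝ} {f : (Fin m → ℝ) → ℝ}
    (hF : ∀ z, F z = f (fun k => z (Sum.inr k))) (hf : Differentiable ℝ f) :
    (∀ (u : Unit) (x), pd F (Sum.inl u) x = 0) ∧
    (∀ (i : Fin m) (x), pd F (Sum.inr i) x = pd f i (fun k => x (Sum.inr k))) := by
  set φ : ((Unit ⊕ Fin m) → ℝ) →L[ℝ] (Fin m → ℝ) :=
    ContinuousLinearMap.pi (fun k => ContinuousLinearMap.proj (Sum.inr k)) with hφdef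
  have hφ : ∀ z : (Unit ⊕ Fin m) → ℝ, φ z = fun k => z (Sum.inr k) := fun z => rfl
  have hFc : F = f ∘ φ := by funext z; rw [hF z, Function.comp_apply, hφ]
  have hfd : ∀ (x : (Unit ⊕ Fin m) → ℝ) (a : Unit ⊕ Fin m),
      fderiv ℝ F x (Pi.single a 1) = fderiv ℝ f (φ x) (φ (Pi.single a 1)) := by
    intro x a
    rw [hFc, fderiv_comp x (hf _) φ.differentiableAt, ContinuousLinearMap.fderiv,
      ContinuousLinearMap.comp_apply]
  constructor
  · intro u x
    rw [pd, hfd]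
    have h0 : φ (Pi.single (Sum.inl u) (1:ℝ)) = 0 := by
      funext k; simp [hφ, Pi.single_apply]
    rw [h0, map_zero]
  · intro i x
    rw [pd, hfd]
    have h1 : φ (Pi.single (Sum.inr i) (1:ℝ)) = Pi.single i 1 := by
      funext k; simp [hφ, Pi.single_apply]
    rw [h1, hφ]
    rfl

end Helpers

/-- If `h` is a pseudo-Riemannian metric in dimension `n − 1 = m ≥ 4` such that the
product metric `g = ε dt² + h` (`ε = ±1`) on `ℝ × N` (dimension `n = m + 1 ≥ 5`)
has vanishing Weyl tensor, then `h` is Einstein: `Ric(h) = (Scal(h)/(n−1)) h`. -/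
theorem weyl_flat_product_einstein (m : ℕ) (hm : 4 ≤ m)
    (ε : ℝ) (hε : ε = 1 ∨ ε = -1)
    (h hinv : (Fin m → ℝ) → Matrix (Fin m) (Fin m) ℝ)
    (hsymm : ∀ y i j, h y i j = h y j i)
    (hhinv : ∀ y, h y * hinv y = 1)
    (hsm : ∀ i j, ContDiff ℝ (⊤ : ℕ∞) (fun y => h y i j))
    (hinvsm : ∀ i j, ContDiff ℝ (⊤ : ℕ∞) (fun y => hinv y i j))
    (g ginv : ((Unit ⊕ Fin m) → ℝ) → Matrix (Unit ⊕ Fin m) (Unit ⊕ Fin m) ℝ)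
    (hgdef : g = fun x => Matrix.of fun a b =>
      match a, b with
      | Sum.inl _, Sum.inl _ => ε
      | Sum.inr i, Sum.inr j => h (fun k => x (Sum.inr k)) i j
      | _, _ => 0)
    (hginvdef : ginv = fun x => Matrix.of fun a b =>
      match a, b with
      | Sum.inl _, Sum.inl _ => ε
      | Sum.inr i, Sum.inr j => hinv (fun k => x (Sum.inr k)) i j
      | _, _ => 0)
    -- hypothesis: the Weyl tensor of the product metric `g` vanishes
    (hweyl : ∀ (x : (Unit ⊕ Fin m) → ℝ) (a b c d : Unit ⊕ Fin m),
      RiemannLow g ginv a b c d x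
        - (2 / (((m : ℝ) + 1) - 2)) *
          ((g x c a * RicciT g ginv b d x - g x c b * RicciT g ginv a d x) / 2
            + (g x d b * RicciT g ginv a c x - g x d a * RicciT g ginv b c x) / 2)
        + (ScalarCurv g ginv x / ((((m : ℝ) + 1) - 1) * (((m : ℝ) + 1) - 2))) *
          (g x a c * g x b d - g x a d * g x b c) = 0) :
    ∀ (y : Fin m → ℝ) (i j : Fin m),
      RicciT h hinv i j y = (ScalarCurv h hinv y / (((m : ℝ) + 1) - 1)) * h y i j := by
  intro y i j
  have hdh : ∀ i j, Differentiable ℝ (fun y => h y i j) :=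
    fun i j => (hsm i j).differentiable (by simp)
  have hΓsm : ∀ k i j, ContDiff ℝ (⊤ : ℕ∞) (Christoffel h hinv k i j) :=
    contDiff_christoffel hsm hinvsm
  have hΓd : ∀ k i j, Differentiable ℝ (Christoffel h hinv k i j) :=
    fun k i j => (hΓsm k i j).differentiable (by simp)
  -- entries of g and ginv
  have hg_tt : ∀ x (u v : Unit), g x (Sum.inl u) (Sum.inl v) = ε := by simp [hgdef]
  have hg_tr : ∀ x (u : Unit) (l : Fin m), g x (Sum.inl u) (Sum.inr l) = 0 := by simp [hgdef]
  have hg_rt : ∀ x (l : Fin m) (u : Unit), g x (Sum.inr l) (Sum.inl u) = 0 := by simp [hgdef]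
  have hg_rr : ∀ x (l l' : Fin m),
      g x (Sum.inr l) (Sum.inr l') = h (fun k => x (Sum.inr k)) l l' := by simp [hgdef]
  have hgi_tt : ∀ x (u v : Unit), ginv x (Sum.inl u) (Sum.inl v) = ε := by simp [hginvdef]
  have hgi_tr : ∀ x (u : Unit) (l : Fin m), ginv x (Sum.inl u) (Sum.inr l) = 0 := by
    simp [hginvdef]
  have hgi_rt : ∀ x (l : Fin m) (u : Unit), ginv x (Sum.inr l) (Sum.inl u) = 0 := by
    simp [hginvdef]
  have hgi_rr : ∀ x (l l' : Fin m),
      ginv x (Sum.inr l) (Sum.inr l') = hinv (fun k => x (Sum.inr k)) l l' := by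
    simp [hginvdef]
  -- partial derivatives of the entries of g
  have hpdg_rr_r : ∀ (l l' c : Fin m) x,
      pd (fun y => g y (Sum.inr l) (Sum.inr l')) (Sum.inr c) x
        = pd (fun w => h w l l') c (fun k => x (Sum.inr k)) :=
    fun l l' c x => (pd_restr' (fun z => hg_rr z l l') (hdh l l')).2 c x
  have hpdg_rr_t : ∀ (l l' : Fin m) (u : Unit) x,
      pd (fun y => g y (Sum.inr l) (Sum.inr l')) (Sum.inl u) x = 0 :=
    fun l l' u x => (pd_restr' (fun z => hg_rr z l l') (hdh l l')).1 u x
  have hpdg_row : ∀ (u : Unit) (b c : Unit ⊕ Fin m) x,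
      pd (fun y => g y (Sum.inl u) b) c x = 0 := by
    intro u b c x
    match b with
    | Sum.inl v => exact pd_congr_const (fun z => hg_tt z u v) c x
    | Sum.inr l => exact pd_congr_const (fun z => hg_tr z u l) c x
  have hpdg_col : ∀ (a : Unit ⊕ Fin m) (u : Unit) (c : Unit ⊕ Fin m) x,
      pd (fun y => g y a (Sum.inl u)) c x = 0 := by
    intro a u c x
    match a with
    | Sum.inl v => exact pd_congr_const (fun z => hg_tt z v u) c x
    | Sum.inr l => exact pd_congr_const (fun z => hg_rt z l u) c x
  have hpdg_time : ∀ (a b : Unit ⊕ Fin m) (u : Unit) x,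
      pd (fun y => g y a b) (Sum.inl u) x = 0 := by
    intro a b u x
    match a, b with
    | Sum.inl v, b' => exact hpdg_row v b' (Sum.inl u) x
    | Sum.inr l, Sum.inl v => exact hpdg_col _ v _ x
    | Sum.inr l, Sum.inr l' => exact hpdg_rr_t l l' u x
  -- Christoffel symbols of g with a time index vanish
  have hΓ_top : ∀ (u : Unit) (b c : Unit ⊕ Fin m),
      Christoffel g ginv (Sum.inl u) b c = fun _ => 0 := by
    intro u b c
    funext x
    unfold Christoffel
    rw [Fintype.sum_sum_type]
    simp only [hgi_tr, zero_mul, Finset.sum_const_zero, add_zero,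
      hpdg_row, hpdg_time, hpdg_col]
    simp
  have hΓ_mid : ∀ (a : Unit ⊕ Fin m) (u : Unit) (c : Unit ⊕ Fin m),
      Christoffel g ginv a (Sum.inl u) c = fun _ => 0 := by
    intro a u c
    funext x
    unfold Christoffel
    simp only [hpdg_col, hpdg_time, hpdg_row]
    simp
  have hΓ_last : ∀ (a b : Unit ⊕ Fin m) (u : Unit),
      Christoffel g ginv a b (Sum.inl u) = fun _ => 0 := by
    intro a b u
    funext x
    unfold Christoffel
    simp only [hpdg_col, hpdg_time, hpdg_row]
    simp
  -- spatial Christoffel symbols of g are those of h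
  have hΓ_sss : ∀ (k i' j' : Fin m),
      Christoffel g ginv (Sum.inr k) (Sum.inr i') (Sum.inr j')
        = fun x => Christoffel h hinv k i' j' (fun k => x (Sum.inr k)) := by
    intro k i' j'
    funext x
    unfold Christoffel
    rw [Fintype.sum_sum_type]
    simp only [hgi_rt, zero_mul, Finset.sum_const_zero, zero_add, hgi_rr,
      hpdg_rr_r]
  -- Riemann tensor of g
  have hRup_t1 : ∀ (u : Unit) (b c d : Unit ⊕ Fin m),
      RiemannUp g ginv (Sum.inl u) b c d = fun _ => 0 := by
    intro u b c d
    funext x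
    unfold RiemannUp
    rw [hΓ_top u d b, hΓ_top u c b]
    simp only [hΓ_top, zero_mul, Finset.sum_const_zero]
    simp [pd_congr_const (F := fun _ : (Unit ⊕ Fin m) → ℝ => (0:ℝ)) (fun _ => rfl)]
  have hRup_t2 : ∀ (a : Unit ⊕ Fin m) (u : Unit) (c d : Unit ⊕ Fin m),
      RiemannUp g ginv a (Sum.inl u) c d = fun _ => 0 := by
    intro a u c d
    funext x
    unfold RiemannUp
    rw [hΓ_last a d u, hΓ_last a c u]
    simp only [hΓ_last, mul_zero, Finset.sum_const_zero]
    simp [pd_congr_const (F := fun _ : (Unit ⊕ Fin m) → ℝ => (0:ℝ)) (fun _ => rfl)]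
  have hRup_sss : ∀ (a b c d : Fin m),
      RiemannUp g ginv (Sum.inr a) (Sum.inr b) (Sum.inr c) (Sum.inr d)
        = fun x => RiemannUp h hinv a b c d (fun k => x (Sum.inr k)) := by
    intro a b c d
    funext x
    unfold RiemannUp
    rw [hΓ_sss a d b, hΓ_sss a c b,
      (pd_restr' (F := fun x => Christoffel h hinv a d b (fun k => x (Sum.inr k)))
        (fun z => rfl) (hΓd a d b)).2 c x,
      (pd_restr' (F := fun x => Christoffel h hinv a c b (fun k => x (Sum.inr k)))
        (fun z => rfl) (hΓd a c b)).2 d x,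
      Fintype.sum_sum_type, Fintype.sum_sum_type]
    simp only [hΓ_last, hΓ_sss, zero_mul, Finset.sum_const_zero, zero_add]
  -- Ricci tensor of g
  have hRic_ss : ∀ (i' j' : Fin m) x,
      RicciT g ginv (Sum.inr i') (Sum.inr j') x
        = RicciT h hinv i' j' (fun k => x (Sum.inr k)) := by
    intro i' j' x
    unfold RicciT
    rw [Fintype.sum_sum_type]
    simp only [hRup_t1, hRup_sss, Finset.sum_const_zero, zero_add]
  have hRic_tt : ∀ (u v : Unit) x, RicciT g ginv (Sum.inl u) (Sum.inl v) x = 0 := by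
    intro u v x
    unfold RicciT
    simp only [hRup_t2]
    simp
  -- scalar curvature of g
  have hScal : ∀ x, ScalarCurv g ginv x = ScalarCurv h hinv (fun k => x (Sum.inr k)) := by
    intro x
    unfold ScalarCurv
    rw [Fintype.sum_sum_type]
    simp only [Fintype.sum_sum_type, hgi_tt, hgi_tr, hgi_rt, hgi_rr, hRic_tt,
      hRic_ss, mul_zero, zero_mul, Finset.sum_const_zero, zero_add, add_zero]
  -- evaluate the Weyl identity at a suitable point and indices
  have hRL : ∀ x, RiemannLow g ginv (Sum.inl ()) (Sum.inr i) (Sum.inl ()) (Sum.inr j) x = 0 := by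
    intro x
    unfold RiemannLow
    rw [Fintype.sum_sum_type]
    simp only [hRup_t1, hg_tr, zero_mul, mul_zero, Finset.sum_const_zero, add_zero]
  set x₀ : (Unit ⊕ Fin m) → ℝ := Sum.elim (fun _ => 0) y with hx0
  have hπ : (fun k => x₀ (Sum.inr k)) = y := rfl
  have key := hweyl x₀ (Sum.inl ()) (Sum.inr i) (Sum.inl ()) (Sum.inr j)
  simp only [hRL x₀, hg_tt, hg_tr, hg_rt, hg_rr, hRic_ss, hRic_tt, hScal, hπ] at key
  have hm4 : (4:ℝ) ≤ (m:ℝ) := by exact_mod_cast hm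
  have h1 : ((m:ℝ) + 1) - 2 ≠ 0 := by nlinarith
  have h2 : ((m:ℝ) + 1) - 1 ≠ 0 := by nlinarith
  have hε0 : ε ≠ 0 := by rcases hε with rfl | rfl <;> norm_num
  field_simp at key ⊢
  rcases hε with rfl | rfl <;> nlinarith [key]
end
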